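/- arXiv:2307.06654 — 8 statements merged into one kernel-verified Lean document; each statement's English description precedes it below -/
import Mathlib

section
/- Every p×q layout can be transformed into a sorted p×q layout without increasing its width or its height: for every p×q layout A there exists a sorted p×q layout A' with W(A') ≤ W(A) and H(A') ≤ H(A). -/
/-- A `p × q` layout: a matrix whose entries are exactly the integers `1, …, p*q`. -/
def IsLayout (p q : ℕ) (A : Fin p → Fin q → ℕ) : Prop :=
  Function.Injective (fun ij : Fin p × Fin q => A ij.1 ij.2) ∧
  (Set.range fun ij : Fin p × Fin q => A ij.1 ij.2) = Set.Icc 1 (p * q)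

/-- Width of a layout with respect to side lengths `l`. -/
def layW (l : ℕ → ℕ) {p q : ℕ} (A : Fin p → Fin q → ℕ) : ℕ :=
  ∑ j : Fin q, Finset.univ.sup fun i : Fin p => l (A i j)

/-- Height of a layout with respect to side lengths `l`. -/
def layH (l : ℕ → ℕ) {p q : ℕ} (A : Fin p → Fin q → ℕ) : ℕ :=
  ∑ i : Fin p, Finset.univ.sup fun j : Fin q => l (A i j)

/-- A layout is sorted if each row and each column is strictly increasing. -/
def IsSorted {p q : ℕ} (A : Fin p → Fin q → ℕ) : Prop :=
  (∀ i, StrictMono (A i)) ∧ (∀ j, StrictMono fun i => A i j)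

/-!
Sort every row, then every column. As `l` is antitone on the entries, after sorting the rows each
row of side lengths is decreasing; then the `j`-th column maximum exceeds a threshold `t` only if
some row has `j + 1` side lengths above `t`, and these sit in `j + 1` distinct columns of the
original layout. Counting, for every `t`, the columns whose maximum exceeds `t` gives the width
bound, while row maxima, hence the height, do not change. Sorting columns is sorting the rows of
the transpose, and it keeps the rows increasing: if row `i' > i` fell below row `i` in column `j`,
the `j + 1` smallest entries of row `i'` would sit above `j + 1` entries of row `i` smaller than
its `(j + 1)`-st smallest.
-/

open Finset Function

lemma sum_eq_sum_range_card_lt {ι : Type*} [Fintype ι] (f : ι → ℕ) {T : ℕ}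
    (hT : ∀ i, f i ≤ T) : ∑ i, f i = ∑ t ∈ range T, #{i | t < f i} := by
  have hf : ∀ i, f i = ∑ t ∈ range T, if t < f i then 1 else 0 := fun i => by
    have hrange : {t ∈ range T | t < f i} = range (f i) := by
      ext t; simpa using fun h => h.trans_le (hT i)
    rw [sum_boole, Nat.cast_id, hrange, card_range]
  rw [sum_congr rfl fun i _ => hf i, sum_comm]
  simp only [sum_boole, Nat.cast_id]

lemma sum_le_sum_of_card_lt_le {ι : Type*} [Fintype ι] {f g : ι → ℕ}
    (h : ∀ t, #{i | t < f i} ≤ #{i | t < g i}) : ∑ i, f i ≤ ∑ i, g i := by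
  have hf : ∀ i, f i ≤ ∑ i, f i + ∑ i, g i := fun i =>
    (single_le_sum (fun i _ => Nat.zero_le (f i)) (mem_univ i)).trans (Nat.le_add_right _ _)
  have hg : ∀ i, g i ≤ ∑ i, f i + ∑ i, g i := fun i =>
    (single_le_sum (fun i _ => Nat.zero_le (g i)) (mem_univ i)).trans (Nat.le_add_left _ _)
  calc ∑ i, f i = ∑ t ∈ range (∑ i, f i + ∑ i, g i), #{i | t < f i} :=
        sum_eq_sum_range_card_lt f hf
    _ ≤ ∑ t ∈ range (∑ i, f i + ∑ i, g i), #{i | t < g i} := sum_le_sum fun t _ => h t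
    _ = ∑ i, g i := (sum_eq_sum_range_card_lt g hg).symm

lemma sum_sup_le_of_antitone_rows {ι : Type*} [Fintype ι] {n : ℕ} (x : ι → Fin n → ℕ)
    (σ : ι → Equiv.Perm (Fin n)) (hσ : ∀ i, Antitone (x i ∘ σ i)) :
    ∑ j, univ.sup (fun i => x i (σ i j)) ≤ ∑ j, univ.sup (fun i => x i j) := by
  refine sum_le_sum_of_card_lt_le fun t => ?_
  set S : Finset (Fin n) := {j | t < univ.sup fun i => x i (σ i j)}
  rcases S.eq_empty_or_nonempty with hS | hS
  · simp [hS]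
  set j₀ := S.max' hS
  obtain ⟨i₀, -, hi₀⟩ := Finset.lt_sup_iff.mp (mem_filter.mp (S.max'_mem hS)).2
  calc #S ≤ #(Iic j₀) := card_le_card fun j hj => mem_Iic.mpr (S.le_max' j hj)
    _ ≤ #{c | t < univ.sup fun i => x i c} := by
      refine card_le_card_of_injOn (σ i₀) (fun j hj => ?_) (σ i₀).injective.injOn
      have hle : x i₀ (σ i₀ j₀) ≤ x i₀ (σ i₀ j) := hσ i₀ (mem_Iic.mp hj)
      have hsup : x i₀ (σ i₀ j) ≤ univ.sup fun i => x i (σ i₀ j) :=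
        le_sup (f := fun i => x i (σ i₀ j)) (mem_univ i₀)
      simpa using hi₀.trans_le (hle.trans hsup)

section Sorting

variable {ι α : Type*} [LinearOrder α] {n : ℕ}

def sortRows (A : ι → Fin n → α) : ι → Fin n → α := fun i => A i ∘ Tuple.sort (A i)

lemma monotone_sortRows (A : ι → Fin n → α) (i : ι) : Monotone (sortRows A i) :=
  Tuple.monotone_sort (A i)

lemma strictMono_sortRows {A : ι → Fin n → α} (hA : ∀ i, Injective (A i)) (i : ι) :
    StrictMono (sortRows A i) :=
  (monotone_sortRows A i).strictMono_of_injective ((hA i).comp (Tuple.sort (A i)).injective)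

lemma card_filter_lt_sort_le (f : Fin n → α) (j : Fin n) :
    #{c | f c < f (Tuple.sort f j)} ≤ j := by
  refine (card_le_card_of_injOn (Tuple.sort f).symm (fun c hc => ?_)
    (Tuple.sort f).symm.injective.injOn).trans (Fin.card_Iio j).le
  rw [mem_coe, mem_filter] at hc
  rw [mem_coe, mem_Iio]
  by_contra! hge
  have hsorted := Tuple.monotone_sort f hge
  rw [comp_apply, comp_apply, Equiv.apply_symm_apply] at hsorted
  exact hc.2.not_ge hsorted

lemma strictMono_sortRows_col {m : ℕ} {A : Fin m → Fin n → α}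
    (hA : ∀ j, StrictMono fun i => A i j) (j : Fin n) : StrictMono fun i => sortRows A i j := by
  intro i i' hii'
  by_contra! hle
  have hmaps : ∀ k ∈ Iic j, Tuple.sort (A i') k ∈
      ({c | A i c < A i (Tuple.sort (A i) j)} : Finset (Fin n)) := fun k hk => by
    rw [mem_filter]
    refine ⟨mem_univ _, ?_⟩
    calc A i (Tuple.sort (A i') k) < A i' (Tuple.sort (A i') k) := hA _ hii'
      _ ≤ sortRows A i' j := monotone_sortRows A i' (mem_Iic.mp hk)
      _ ≤ sortRows A i j := hle
  have hcard := (card_le_card_of_injOn _ hmaps (Tuple.sort (A i')).injective.injOn).trans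
    (card_filter_lt_sort_le (A i) j)
  rw [Fin.card_Iic] at hcard
  omega

end Sorting

lemma IsSorted.swap {p q : ℕ} {A : Fin p → Fin q → ℕ} (hA : IsSorted A) : IsSorted (swap A) :=
  ⟨hA.2, hA.1⟩

namespace IsLayout

variable {p q : ℕ} {A : Fin p → Fin q → ℕ}

lemma one_le (hA : IsLayout p q A) (i : Fin p) (j : Fin q) : 1 ≤ A i j :=
  (hA.2.subset ⟨(i, j), rfl⟩).1

lemma injective_row (hA : IsLayout p q A) (i : Fin p) : Injective (A i) :=
  fun _ _ h => (Prod.ext_iff.mp (hA.1 (a₁ := (i, _)) (a₂ := (i, _)) h)).2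

lemma comp_equiv {p' q' : ℕ} (hA : IsLayout p q A) (e : Fin p' × Fin q' ≃ Fin p × Fin q)
    (hpq : p' * q' = p * q) : IsLayout p' q' fun i j => A (e (i, j)).1 (e (i, j)).2 :=
  ⟨hA.1.comp e.injective, by
    rw [hpq, ← hA.2]; exact e.surjective.range_comp fun ij : Fin p × Fin q => A ij.1 ij.2⟩

protected lemma swap (hA : IsLayout p q A) : IsLayout q p (swap A) :=
  hA.comp_equiv (Equiv.prodComm _ _) (mul_comm q p)

protected lemma sortRows (hA : IsLayout p q A) : IsLayout p q (sortRows A) :=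
  hA.comp_equiv (Equiv.prodCongrRight fun i => Tuple.sort (A i)) rfl

end IsLayout

section Dimensions

variable (l : ℕ → ℕ) {p q : ℕ}

lemma layW_swap (A : Fin p → Fin q → ℕ) : layW l (swap A) = layH l A := rfl

lemma layH_swap (A : Fin p → Fin q → ℕ) : layH l (swap A) = layW l A := rfl

lemma layH_sortRows (A : Fin p → Fin q → ℕ) : layH l (sortRows A) = layH l A := by
  refine sum_congr rfl fun i _ => ?_
  exact (sup_map univ (Tuple.sort (A i)).toEmbedding fun j => l (A i j)).symm.trans
    (by rw [map_univ_equiv])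

variable {l}

lemma layW_sortRows_le {s : Set ℕ} (hl : AntitoneOn l s) {A : Fin p → Fin q → ℕ}
    (hA : ∀ i j, A i j ∈ s) : layW l (sortRows A) ≤ layW l A :=
  sum_sup_le_of_antitone_rows (fun i j => l (A i j)) (fun i => Tuple.sort (A i))
    fun i _ _ hab => hl (hA _ _) (hA _ _) (monotone_sortRows A i hab)

end Dimensions

theorem sorted_layout_exists_general (p q : ℕ) (l : ℕ → ℕ)
    (hl : ∀ a b, 1 ≤ a → a ≤ b → l b ≤ l a)
    (A : Fin p → Fin q → ℕ) (hA : IsLayout p q A) :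
    ∃ A' : Fin p → Fin q → ℕ, IsLayout p q A' ∧ IsSorted A' ∧
      layW l A' ≤ layW l A ∧ layH l A' ≤ layH l A := by
  have hl_anti : AntitoneOn l (Set.Ici 1) := fun a ha b _ hab => hl a b ha hab
  set B := sortRows A
  set D := sortRows (swap B)
  have hB : IsLayout p q B := hA.sortRows
  have hD : IsLayout q p D := hB.swap.sortRows
  have hD_sorted : IsSorted D :=
    ⟨strictMono_sortRows hB.swap.injective_row,
      strictMono_sortRows_col (strictMono_sortRows hA.injective_row)⟩
  refine ⟨swap D, hD.swap, hD_sorted.swap, ?_, ?_⟩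
  · calc layW l (swap D) = layH l D := layW_swap l D
      _ = layH l (swap B) := layH_sortRows l (swap B)
      _ = layW l B := layH_swap l B
      _ ≤ layW l A := layW_sortRows_le hl_anti fun i j => hA.one_le i j
  · calc layH l (swap D) = layW l D := layH_swap l D
      _ ≤ layW l (swap B) := layW_sortRows_le hl_anti fun i j => hB.one_le j i
      _ = layH l B := layW_swap l B
      _ = layH l A := layH_sortRows l A

/-- Every `p × q` layout can be transformed into a sorted `p × q` layout
without increasing its width or its height. -/
theorem sorted_layout_exists (p q : ℕ) (hp : 0 < p) (hq : 0 < q) (l : ℕ → ℕ)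
    (hl : ∀ a b, 1 ≤ a → a ≤ b → l b ≤ l a)
    (A : Fin p → Fin q → ℕ) (hA : IsLayout p q A) :
    ∃ A' : Fin p → Fin q → ℕ, IsLayout p q A' ∧ IsSorted A' ∧
      layW l A' ≤ layW l A ∧ layH l A' ≤ layH l A :=
  sorted_layout_exists_general p q l hl A hA
end

section
/- There exists a sorted layout that is optimal to the SIPP: if the SIPP instance has any feasible layout, then there is a sorted layout A with W(A) ≤ b whose height H(A) equals the minimum of H over all layouts (of all dimensions) with width at most b. -/
/-
Start from a feasible layout of minimal height. Sorting every row keeps each row's maximum, hence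
the height, and does not increase the width: after sorting, the sizes along a row decrease, so the
`j`-th size of a row is at most the `j`-th largest column maximum of the original layout. Sorting
the columns afterwards is the transposed operation, so it keeps the width and does not increase
the height. The rows stay sorted because the `k`-th smallest entry of a tuple is monotone in the
tuple, and column `j` is entrywise below column `j + 1` once the rows are sorted.
-/

open Finset Function

section Rearrangement

variable {n : ℕ} {α : Type*} [LinearOrder α] {x y : Fin n → α} {σ τ : Equiv.Perm (Fin n)}

theorem comp_le_comp_of_le_of_monotone (hσ : Monotone (x ∘ σ)) (hτ : Monotone (y ∘ τ))
    (hxy : x ≤ y) : x ∘ σ ≤ y ∘ τ := by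
  classical
  intro k
  have hcard : #{j | y (τ j) ≤ y (τ k)} ≤ #{j | x (σ j) ≤ y (τ k)} :=
    calc #{j | y (τ j) ≤ y (τ k)} = #{t | y t ≤ y (τ k)} := card_equiv τ (by simp)
      _ ≤ #{t | x t ≤ y (τ k)} :=
        card_le_card (monotone_filter_right _ fun t _ => (hxy t).trans)
      _ = #{j | x (σ j) ≤ y (τ k)} := (card_equiv σ (by simp)).symm
  exact (Tuple.lt_card_le_iff_apply_le_of_monotone hσ).1 <|
    ((Tuple.lt_card_le_iff_apply_le_of_monotone hτ).2 le_rfl).trans_le hcard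

theorem comp_le_comp_of_le_of_antitone (hσ : Antitone (x ∘ σ)) (hτ : Antitone (y ∘ τ))
    (hxy : x ≤ y) : x ∘ σ ≤ y ∘ τ :=
  comp_le_comp_of_le_of_monotone (α := αᵒᵈ) (x := OrderDual.toDual ∘ y)
    (y := OrderDual.toDual ∘ x) hτ.dual_right hσ.dual_right hxy

end Rearrangement

section Sorting

variable {p q : ℕ} {α : Type*} [LinearOrder α]

def rowSort (A : Fin p → Fin q → α) : Fin p → Fin q → α :=
  fun i => A i ∘ Tuple.sort (A i)

def colSort (A : Fin p → Fin q → α) : Fin p → Fin q → α :=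
  swap (rowSort (swap A))

theorem monotone_rowSort (A : Fin p → Fin q → α) (i : Fin p) :
    Monotone (rowSort A i) :=
  Tuple.monotone_sort (A i)

theorem monotone_rowSort_col {A : Fin p → Fin q → α}
    (hA : Monotone A) (j : Fin q) : Monotone fun i => rowSort A i j :=
  fun _ _ hii' => comp_le_comp_of_le_of_monotone (Tuple.monotone_sort _) (Tuple.monotone_sort _)
    (hA hii') j

theorem isLayout_swap {A : Fin p → Fin q → ℕ} (hA : IsLayout p q A) :
    IsLayout q p (swap A) := by
  refine ⟨fun ji ji' h => Prod.swap_injective (hA.1 h), ?_⟩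
  rw [Nat.mul_comm, ← hA.2]
  exact (Equiv.prodComm _ _).surjective.range_comp fun ij => A ij.1 ij.2

theorem isLayout_rowSort {A : Fin p → Fin q → ℕ} (hA : IsLayout p q A) :
    IsLayout p q (rowSort A) := by
  let e : Fin p × Fin q ≃ Fin p × Fin q := Equiv.sigmaEquivProd _ _ |>.symm.trans
    ((Equiv.sigmaCongrRight fun i => Tuple.sort (A i)).trans (Equiv.sigmaEquivProd _ _))
  have he : (fun ij : Fin p × Fin q => rowSort A ij.1 ij.2) = (fun ij => A ij.1 ij.2) ∘ e :=
    rfl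
  refine ⟨?_, ?_⟩
  · rw [he]; exact hA.1.comp e.injective
  · rw [he, e.surjective.range_comp]; exact hA.2

theorem isLayout_colSort {A : Fin p → Fin q → ℕ} (hA : IsLayout p q A) :
    IsLayout p q (colSort A) :=
  isLayout_swap (isLayout_rowSort (isLayout_swap hA))

theorem IsLayout.one_le_s1 {A : Fin p → Fin q → ℕ} (hA : IsLayout p q A) (i : Fin p)
    (j : Fin q) : 1 ≤ A i j :=
  (hA.2.subset ⟨(i, j), rfl⟩).1

theorem IsLayout.isSorted {A : Fin p → Fin q → ℕ} (hA : IsLayout p q A)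
    (hrow : ∀ i, Monotone (A i)) (hcol : ∀ j, Monotone fun i => A i j) : IsSorted A :=
  ⟨fun i => (hrow i).strictMono_of_injective fun j j' h =>
      congrArg Prod.snd (hA.1 (a₁ := (i, j)) (a₂ := (i, j')) h),
    fun j => (hcol j).strictMono_of_injective fun i i' h =>
      congrArg Prod.fst (hA.1 (a₁ := (i, j)) (a₂ := (i', j)) h)⟩

theorem isSorted_colSort_rowSort {A : Fin p → Fin q → ℕ} (hA : IsLayout p q A) :
    IsSorted (colSort (rowSort A)) :=
  (isLayout_colSort (isLayout_rowSort hA)).isSorted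
    (monotone_rowSort_col fun _ _ hjj' i => monotone_rowSort A i hjj')
    (monotone_rowSort _)

end Sorting

section WidthHeight

variable {p q : ℕ} (l : ℕ → ℕ)

theorem layH_rowSort (A : Fin p → Fin q → ℕ) : layH l (rowSort A) = layH l A :=
  sum_congr rfl fun i _ => by
    have := sup_map univ (Tuple.sort (A i)).toEmbedding fun j => l (A i j)
    rw [map_univ_equiv] at this
    exact this.symm

theorem layW_colSort (A : Fin p → Fin q → ℕ) : layW l (colSort A) = layW l A :=
  layH_rowSort l (swap A)

variable {l} {s : Set ℕ} (hl : AntitoneOn l s)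
include hl

theorem layW_rowSort_le {A : Fin p → Fin q → ℕ} (hA : ∀ i j, A i j ∈ s) :
    layW l (rowSort A) ≤ layW l A := by
  set w : Fin q → ℕ := fun j => univ.sup fun i => l (A i j)
  set τ := Tuple.sort (OrderDual.toDual ∘ w)
  have hτ : Antitone (w ∘ τ) := Tuple.monotone_sort (OrderDual.toDual ∘ w)
  have hrow (i : Fin p) : Antitone ((fun j => l (A i j)) ∘ Tuple.sort (A i)) :=
    fun _ _ hjj' => hl (hA _ _) (hA _ _) (Tuple.monotone_sort (A i) hjj')
  have hle (i : Fin p) : (fun j => l (A i j)) ≤ w :=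
    fun j => le_sup (f := fun i => l (A i j)) (mem_univ i)
  calc layW l (rowSort A) ≤ ∑ j, w (τ j) :=
        sum_le_sum fun j _ => Finset.sup_le fun i _ =>
          comp_le_comp_of_le_of_antitone (hrow i) hτ (hle i) j
    _ = layW l A := Equiv.sum_comp τ w

theorem layH_colSort_le {A : Fin p → Fin q → ℕ} (hA : ∀ i j, A i j ∈ s) :
    layH l (colSort A) ≤ layH l A :=
  layW_rowSort_le hl fun j i => hA i j

end WidthHeight

theorem sorted_layout_optimal_general (n b : ℕ) (l : ℕ → ℕ)
    (hmono : ∀ a c, 1 ≤ a → a ≤ c → c ≤ n → l c ≤ l a)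
    (hzero : ∀ k, n < k → l k = 0)
    (hfeas : ∃ (p q : ℕ) (A : Fin p → Fin q → ℕ),
      n ≤ p * q ∧ IsLayout p q A ∧ layW l A ≤ b) :
    ∃ (p q : ℕ) (A : Fin p → Fin q → ℕ),
      n ≤ p * q ∧ IsLayout p q A ∧ IsSorted A ∧ layW l A ≤ b ∧
      ∀ (p' q' : ℕ) (B : Fin p' → Fin q' → ℕ),
        n ≤ p' * q' → IsLayout p' q' B → layW l B ≤ b → layH l A ≤ layH l B := by
  have hl : AntitoneOn l (Set.Ici 1) := fun a ha c _ hac => by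
    rcases le_or_gt c n with hc | hc
    · exact hmono a c ha hac hc
    · simp [hzero c hc]
  obtain ⟨⟨p, q, B⟩, ⟨hn, hB, hWB⟩, hmin⟩ :=
    (InvImage.wf (fun B : Σ p q, Fin p → Fin q → ℕ => layH l B.2.2) wellFounded_lt).has_min
      {B | n ≤ B.1 * B.2.1 ∧ IsLayout B.1 B.2.1 B.2.2 ∧ layW l B.2.2 ≤ b}
      (by obtain ⟨p, q, A, hA⟩ := hfeas; exact ⟨⟨p, q, A⟩, hA⟩)
  refine ⟨p, q, colSort (rowSort B), hn, isLayout_colSort (isLayout_rowSort hB),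
    isSorted_colSort_rowSort hB, ?_, fun p' q' B' hn' hB' hWB' => ?_⟩
  · calc layW l (colSort (rowSort B)) = layW l (rowSort B) := layW_colSort l _
      _ ≤ layW l B := layW_rowSort_le hl hB.one_le_s1
      _ ≤ b := hWB
  · calc layH l (colSort (rowSort B)) ≤ layH l (rowSort B) :=
          layH_colSort_le hl (isLayout_rowSort hB).one_le_s1
      _ = layH l B := layH_rowSort l B
      _ ≤ layH l B' := not_lt.1 (hmin ⟨p', q', B'⟩ ⟨hn', hB', hWB'⟩)

/-- If the SIPP instance has any feasible layout, then there is a sorted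
feasible layout whose height equals the minimum height over all feasible layouts. -/
theorem sorted_layout_optimal (n b : ℕ) (l : ℕ → ℕ)
    (hmono : ∀ a c, 1 ≤ a → a ≤ c → c ≤ n → l c ≤ l a)
    (hpos : ∀ k, 1 ≤ k → k ≤ n → 0 < l k)
    (hzero : ∀ k, n < k → l k = 0)
    (hfeas : ∃ (p q : ℕ) (A : Fin p → Fin q → ℕ),
      n ≤ p * q ∧ IsLayout p q A ∧ layW l A ≤ b) :
    ∃ (p q : ℕ) (A : Fin p → Fin q → ℕ),
      n ≤ p * q ∧ IsLayout p q A ∧ IsSorted A ∧ layW l A ≤ b ∧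
      ∀ (p' q' : ℕ) (B : Fin p' → Fin q' → ℕ),
        n ≤ p' * q' → IsLayout p' q' B → layW l B ≤ b → layH l A ≤ layH l B :=
  sorted_layout_optimal_general n b l hmono hzero hfeas
end

section
/- For a sorted p×q layout A = (a_{ij}), if the top-left p'×q' submatrix A_{p'q'} is itself a sorted layout (i.e., its entries are exactly the integers 1,…,p'q') and p'q' < pq, then either q' < q and a_{1,q'+1} = p'q'+1, or p' < p and a_{p'+1,1} = p'q'+1. -/
/-- For a sorted `p × q` layout whose top-left `p' × q'` submatrix is itself a
layout (its entries are exactly `1, …, p'*q'`), with `p'*q' < p*q`, the value `p'*q' + 1` sits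
either at position `(1, q'+1)` or at position `(p'+1, 1)`. -/
theorem sorted_layout_next (p q p' q' : ℕ) (hp : 0 < p) (hq : 0 < q)
    (hp' : p' ≤ p) (hq' : q' ≤ q)
    (A : Fin p → Fin q → ℕ) (hA : IsLayout p q A) (hS : IsSorted A)
    (hsub : IsLayout p' q'
      (fun (i : Fin p') (j : Fin q') => A (Fin.castLE hp' i) (Fin.castLE hq' j)))
    (hlt : p' * q' < p * q) :
    (∃ h : q' < q, A ⟨0, hp⟩ ⟨q', h⟩ = p' * q' + 1) ∨
    (∃ h : p' < p, A ⟨p', h⟩ ⟨0, hq⟩ = p' * q' + 1) := by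
  obtain ⟨hinj, hrange⟩ := hA
  obtain ⟨hsinj, hsrange⟩ := hsub
  -- every value of the submatrix is at most p'*q'
  have hin : ∀ (i : Fin p) (j : Fin q), (i : ℕ) < p' → (j : ℕ) < q' → A i j ≤ p' * q' := by
    intro i j hi hj
    have : A (Fin.castLE hp' ⟨i, hi⟩) (Fin.castLE hq' ⟨j, hj⟩) ∈ Set.Icc 1 (p' * q') := by
      rw [← hsrange]; exact ⟨(⟨i, hi⟩, ⟨j, hj⟩), rfl⟩
    have hcast : (Fin.castLE hp' ⟨i, hi⟩ : Fin p) = i := rfl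
    have hcast' : (Fin.castLE hq' ⟨j, hj⟩ : Fin q) = j := rfl
    rw [hcast, hcast'] at this
    exact this.2
  -- every value between 1 and p'*q' sits in the block
  have hblock : ∀ (i : Fin p) (j : Fin q), 1 ≤ A i j → A i j ≤ p' * q' →
      (i : ℕ) < p' ∧ (j : ℕ) < q' := by
    intro i j h1 h2
    have hmem : A i j ∈ Set.Icc 1 (p' * q') := ⟨h1, h2⟩
    rw [← hsrange] at hmem
    obtain ⟨⟨a, b⟩, hab⟩ := hmem
    have heq : (⟨Fin.castLE hp' a, Fin.castLE hq' b⟩ : Fin p × Fin q) = (i, j) :=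
      hinj hab
    have h1 : (Fin.castLE hp' a : Fin p) = i := congrArg Prod.fst heq
    have h2 : (Fin.castLE hq' b : Fin q) = j := congrArg Prod.snd heq
    constructor
    · rw [← h1]; exact a.isLt
    · rw [← h2]; exact b.isLt
  -- all values are at least 1
  have hval : ∀ (i : Fin p) (j : Fin q), 1 ≤ A i j := by
    intro i j
    have : A i j ∈ Set.Icc 1 (p * q) := by rw [← hrange]; exact ⟨(i, j), rfl⟩
    exact this.1
  -- find the position of p'*q'+1
  have hmem : p' * q' + 1 ∈ Set.Icc 1 (p * q) := ⟨Nat.le_add_left 1 _, hlt⟩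
  rw [← hrange] at hmem
  obtain ⟨⟨i, j⟩, hij⟩ := hmem
  have hij : A i j = p' * q' + 1 := hij
  rcases Nat.eq_zero_or_pos (i : ℕ) with hi0 | hi0 <;>
    rcases Nat.eq_zero_or_pos (j : ℕ) with hj0 | hj0
  · -- i = 0, j = 0 : then p'*q' = 0
    have hpq0 : p' * q' = 0 := by
      by_contra h
      have h1 : (1 : ℕ) ∈ Set.Icc 1 (p' * q') := ⟨le_refl _, Nat.one_le_iff_ne_zero.mpr h⟩
      rw [← hsrange] at h1
      obtain ⟨⟨a, b⟩, hab⟩ := h1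
      simp only at hab
      have hle : A i j ≤ A (Fin.castLE hp' a) (Fin.castLE hq' b) := by
        have h1 : A i j ≤ A i (Fin.castLE hq' b) :=
          (hS.1 i).monotone (by simp [Fin.le_def, hj0])
        have h2 : A i (Fin.castLE hq' b) ≤ A (Fin.castLE hp' a) (Fin.castLE hq' b) :=
          (hS.2 _).monotone (by simp [Fin.le_def, hi0])
        exact h1.trans h2
      rw [hij, hab] at hle
      omega
    rcases Nat.mul_eq_zero.mp hpq0 with hp0 | hq0
    · right
      refine ⟨hp0 ▸ hp, ?_⟩
      have : (⟨p', hp0 ▸ hp⟩ : Fin p) = i := Fin.ext (by simp only [Fin.val_mk]; omega)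
      have hj : (⟨0, hq⟩ : Fin q) = j := Fin.ext (by simp only [Fin.val_mk]; omega)
      rw [this, hj, hij]
    · left
      refine ⟨hq0 ▸ hq, ?_⟩
      have : (⟨q', hq0 ▸ hq⟩ : Fin q) = j := Fin.ext (by simp only [Fin.val_mk]; omega)
      have hi : (⟨0, hp⟩ : Fin p) = i := Fin.ext (by simp only [Fin.val_mk]; omega)
      rw [this, hi, hij]
  · -- i = 0, 0 < j
    have hjlt : (j : ℕ) - 1 < q := by omega
    have hlt1 : A i ⟨(j : ℕ) - 1, hjlt⟩ < A i j := (hS.1 i) (by simp [Fin.lt_def]; omega)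
    have hb := hblock i ⟨(j : ℕ) - 1, hjlt⟩ (hval _ _) (by omega)
    -- (i,j) itself is not in the block
    have hnot : ¬ ((i : ℕ) < p' ∧ (j : ℕ) < q') := by
      rintro ⟨h1, h2⟩
      have := hin i j h1 h2
      omega
    have hjq' : (j : ℕ) = q' := by
      rcases Nat.lt_or_ge (j : ℕ) q' with h | h
      · exact absurd ⟨hb.1, h⟩ hnot
      · simp only [Fin.val_mk] at hb; omega
    left
    refine ⟨hjq' ▸ j.isLt, ?_⟩
    have h1 : (⟨0, hp⟩ : Fin p) = i := Fin.ext (by simp only [Fin.val_mk]; omega)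
    have h2 : (⟨q', hjq' ▸ j.isLt⟩ : Fin q) = j := Fin.ext (by simpa using hjq'.symm)
    rw [h1, h2, hij]
  · -- 0 < i, j = 0
    have hilt : (i : ℕ) - 1 < p := by omega
    have hlt1 : A ⟨(i : ℕ) - 1, hilt⟩ j < A i j := (hS.2 j) (by simp [Fin.lt_def]; omega)
    have hb := hblock ⟨(i : ℕ) - 1, hilt⟩ j (hval _ _) (by omega)
    have hnot : ¬ ((i : ℕ) < p' ∧ (j : ℕ) < q') := by
      rintro ⟨h1, h2⟩
      have := hin i j h1 h2
      omega
    have hip' : (i : ℕ) = p' := by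
      rcases Nat.lt_or_ge (i : ℕ) p' with h | h
      · exact absurd ⟨h, hb.2⟩ hnot
      · simp only [Fin.val_mk] at hb; omega
    right
    refine ⟨hip' ▸ i.isLt, ?_⟩
    have h1 : (⟨p', hip' ▸ i.isLt⟩ : Fin p) = i := Fin.ext (by simpa using hip'.symm)
    have h2 : (⟨0, hq⟩ : Fin q) = j := Fin.ext (by simp only [Fin.val_mk]; omega)
    rw [h1, h2, hij]
  · -- 0 < i, 0 < j : contradiction
    exfalso
    have hilt : (i : ℕ) - 1 < p := by omega
    have hjlt : (j : ℕ) - 1 < q := by omega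
    have hlt1 : A ⟨(i : ℕ) - 1, hilt⟩ j < A i j := (hS.2 j) (by simp [Fin.lt_def]; omega)
    have hlt2 : A i ⟨(j : ℕ) - 1, hjlt⟩ < A i j := (hS.1 i) (by simp [Fin.lt_def]; omega)
    have hb1 := hblock ⟨(i : ℕ) - 1, hilt⟩ j (hval _ _) (by omega)
    have hb2 := hblock i ⟨(j : ℕ) - 1, hjlt⟩ (hval _ _) (by omega)
    have := hin i j hb2.1 hb1.2
    omega
end

section
/- Every sorted layout can be transformed into an RC layout without increasing its width or its height: for every sorted p×q layout A there exists a p×q RC layout A' with W(A') ≤ W(A) and H(A') ≤ H(A). -/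
/-- RC layouts: obtainable from the 1×1 base layout by add-row and add-column operations. -/
inductive IsRC : {p q : ℕ} → (Fin p → Fin q → ℕ) → Prop
  | base : IsRC (fun (_ : Fin 1) (_ : Fin 1) => 1)
  | addRow {p q : ℕ} {A : Fin p → Fin q → ℕ} (h : IsRC A) :
      IsRC (fun (i : Fin (p + 1)) (j : Fin q) =>
        if hi : (i : ℕ) < p then A ⟨i, hi⟩ j else p * q + (j : ℕ) + 1)
  | addCol {p q : ℕ} {A : Fin p → Fin q → ℕ} (h : IsRC A) :
      IsRC (fun (i : Fin p) (j : Fin (q + 1)) =>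
        if hj : (j : ℕ) < q then A i ⟨j, hj⟩ else p * q + (i : ℕ) + 1)


/-!
Because `l` is nonincreasing and the rows and columns of a sorted layout increase, `W(A)` and
`H(A)` are determined by the first row `r` and first column `c` of `A`; so it suffices to find an
RC layout whose entries in column `j` are at least `r j` and whose entries in row `i` are at least
`c i`. Counting the entries smaller than a given one gives (0-indexed) `r j ≤ p j + 1`,
`c i ≤ i q + 1`, and `r j ≤ i j + 1` or `c i ≤ i j + 1` for every `i, j`. These bounds are stable
under deleting the last row when `r j ≤ (p - 1) j + 1` for all `j`; otherwise some `j ≥ 1` violates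
this, the cross bound forces `c i ≤ i j + 1 ≤ i (q - 1) + 1`, and the last column can be deleted.
The row or column that the RC construction then appends back starts at `p j + 1` or `i q + 1`, so
by induction on `p + q` an RC layout with the required entries exists.
-/

open Finset

variable {p q : ℕ}

theorem IsLayout.mem_Icc {A : Fin p → Fin q → ℕ} (hA : IsLayout p q A) (i : Fin p) (j : Fin q) :
    A i j ∈ Set.Icc 1 (p * q) :=
  hA.2 ▸ ⟨(i, j), rfl⟩

theorem IsLayout.le_mul_add_one {A : Fin p → Fin q → ℕ} (hA : IsLayout p q A) {a b t : ℕ}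
    (ht : t ≤ p * q + 1) (h : ∀ i j, A i j < t → (i : ℕ) < a ∧ (j : ℕ) < b) :
    t ≤ a * b + 1 := by
  set S := univ.filter fun ij : Fin p × Fin q => A ij.1 ij.2 < t
  have hvalues : Ico 1 t ⊆ S.image fun ij => A ij.1 ij.2 := by
    intro v hv
    obtain ⟨hv1, hvt⟩ := mem_Ico.mp hv
    obtain ⟨ij, hij⟩ : v ∈ Set.range fun ij : Fin p × Fin q => A ij.1 ij.2 :=
      hA.2 ▸ ⟨hv1, by omega⟩
    exact mem_image.mpr ⟨ij, by simp [S, hij, hvt], hij⟩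
  have hcorner : S.card ≤ (range a ×ˢ range b).card :=
    card_le_card_of_injOn (fun ij => ((ij.1 : ℕ), (ij.2 : ℕ)))
      (fun ij hij => by simpa using h _ _ (mem_filter.mp hij).2)
      (fun x _ y _ hxy => Prod.ext (Fin.ext (Prod.mk.inj hxy).1) (Fin.ext (Prod.mk.inj hxy).2))
  have := (card_le_card hvalues).trans card_image_le
  simp only [Nat.card_Ico, card_product, card_range] at this hcorner
  omega

theorem IsSorted.lt_or_lt_of_lt {A : Fin p → Fin q → ℕ} (hS : IsSorted A) {i i' : Fin p}
    {j j' : Fin q} (h : A i j < A i' j') : i < i' ∨ j < j' := by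
  by_contra! hle
  exact (((hS.1 i').monotone hle.2).trans ((hS.2 j).monotone hle.1)).not_gt h

/-- The bounds (with 0-indexed rows and columns) satisfied by the first row `r` and the first
column `c` of a sorted `p × q` layout. -/
structure FrameBounds (p q : ℕ) (r : Fin q → ℕ) (c : Fin p → ℕ) : Prop where
  row : ∀ j : Fin q, r j ≤ p * j + 1
  col : ∀ i : Fin p, c i ≤ i * q + 1
  cross : ∀ (i : Fin p) (j : Fin q), r j ≤ i * j + 1 ∨ c i ≤ i * j + 1

theorem IsSorted.frameBounds {A : Fin (p + 1) → Fin (q + 1) → ℕ} (hS : IsSorted A)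
    (hA : IsLayout (p + 1) (q + 1) A) : FrameBounds (p + 1) (q + 1) (A 0) (fun i => A i 0) where
  row j := hA.le_mul_add_one (by have := (hA.mem_Icc 0 j).2; omega) fun a b hab =>
    ⟨a.isLt, (hS.lt_or_lt_of_lt hab).resolve_left (Fin.not_lt_zero a)⟩
  col i := hA.le_mul_add_one (by have := (hA.mem_Icc i 0).2; omega) fun a b hab =>
    ⟨(hS.lt_or_lt_of_lt hab).resolve_right (Fin.not_lt_zero b), b.isLt⟩
  cross i j := by
    by_contra! h
    have hij : (i : ℕ) * j ≤ p * q := Nat.mul_le_mul i.is_le j.is_le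
    have := hA.le_mul_add_one (t := i * j + 1 + 1) (by nlinarith) fun a b hab =>
      ⟨(hS.lt_or_lt_of_lt (hab.trans_le h.2)).resolve_right (Fin.not_lt_zero b),
        (hS.lt_or_lt_of_lt (hab.trans_le h.1)).resolve_left (Fin.not_lt_zero a)⟩
    omega

namespace FrameBounds

variable {r : Fin q → ℕ} {c : Fin p → ℕ}

theorem removeRow {c : Fin (p + 1) → ℕ} (h : FrameBounds (p + 1) q r c)
    (hrow : ∀ j, r j ≤ p * j + 1) : FrameBounds p q r (fun i => c i.castSucc) where
  row := hrow
  col i := h.col i.castSucc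
  cross i j := h.cross i.castSucc j

theorem removeCol {r : Fin (q + 1) → ℕ} (h : FrameBounds p (q + 1) r c)
    (hcol : ∀ i, c i ≤ i * q + 1) : FrameBounds p q (fun j => r j.castSucc) c where
  row j := h.row j.castSucc
  col := hcol
  cross i j := h.cross i j.castSucc

theorem removable_row_or_col {r : Fin (q + 1) → ℕ} {c : Fin (p + 1) → ℕ}
    (h : FrameBounds (p + 1) (q + 1) r c) (hpq : 0 < p + q) :
    (0 < p ∧ ∀ j, r j ≤ p * j + 1) ∨ (0 < q ∧ ∀ i, c i ≤ i * q + 1) := by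
  by_cases hrow : 0 < p ∧ ∀ j, r j ≤ p * j + 1
  · exact Or.inl hrow
  refine Or.inr ?_
  rcases Nat.eq_zero_or_pos p with rfl | hp
  · refine ⟨by omega, fun i => ?_⟩
    simpa [Fin.fin_one_eq_zero i] using h.col 0
  obtain ⟨j, hj⟩ : ∃ j, p * j + 1 < r j := by simpa [hp] using hrow
  have hj0 : (j : ℕ) ≠ 0 := fun h0 => by have := h.row j; simp only [h0] at hj this; omega
  have hjq : (j : ℕ) ≤ q := j.is_le
  refine ⟨by omega, fun i => ?_⟩
  have hip : (i : ℕ) ≤ p := i.is_le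
  rcases h.cross i j with hr | hc
  · have := Nat.mul_le_mul_right (j : ℕ) hip
    omega
  · have := Nat.mul_le_mul_left (i : ℕ) hjq
    omega

theorem exists_isRC {p q : ℕ} {r : Fin (q + 1) → ℕ} {c : Fin (p + 1) → ℕ}
    (h : FrameBounds (p + 1) (q + 1) r c) :
    ∃ A : Fin (p + 1) → Fin (q + 1) → ℕ, IsRC A ∧ ∀ i j, r j ≤ A i j ∧ c i ≤ A i j := by
  rcases Nat.eq_zero_or_pos (p + q) with hpq | hpq
  · obtain ⟨rfl, rfl⟩ : p = 0 ∧ q = 0 := by omega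
    refine ⟨fun _ _ => 1, IsRC.base, fun i j => ?_⟩
    simpa [Fin.fin_one_eq_zero i, Fin.fin_one_eq_zero j] using And.intro (h.row 0) (h.col 0)
  rcases h.removable_row_or_col hpq with ⟨hp, hrow⟩ | ⟨hq, hcol⟩
  · obtain ⟨p, rfl⟩ := Nat.exists_eq_add_one_of_ne_zero hp.ne'
    obtain ⟨A, hRC, hdom⟩ := exists_isRC (h.removeRow hrow)
    refine ⟨_, hRC.addRow, fun i j => ?_⟩
    by_cases hi : (i : ℕ) < p + 1
    · rw [dif_pos hi]
      exact hdom ⟨i, hi⟩ j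
    have hc := h.col i
    rw [show (i : ℕ) = p + 1 by omega] at hc
    have := Nat.mul_le_mul_left (p + 1) j.isLt.le
    rw [dif_neg hi]
    exact ⟨by have := hrow j; omega, by omega⟩
  · obtain ⟨q, rfl⟩ := Nat.exists_eq_add_one_of_ne_zero hq.ne'
    obtain ⟨A, hRC, hdom⟩ := exists_isRC (h.removeCol hcol)
    refine ⟨_, hRC.addCol, fun i j => ?_⟩
    by_cases hj : (j : ℕ) < q + 1
    · rw [dif_pos hj]
      exact hdom i ⟨j, hj⟩
    have hr := h.row j
    rw [show (j : ℕ) = q + 1 by omega] at hr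
    have := Nat.mul_le_mul_right (q + 1) i.isLt.le
    rw [dif_neg hj]
    exact ⟨by omega, by have := hcol i; omega⟩
termination_by p + q

end FrameBounds

theorem layW_le_of_row_le {l : ℕ → ℕ} (hl : ∀ a b, 1 ≤ a → a ≤ b → l b ≤ l a)
    {A A' : Fin p → Fin q → ℕ} (i₀ : Fin p) (hpos : ∀ j, 1 ≤ A i₀ j)
    (hle : ∀ i j, A i₀ j ≤ A' i j) : layW l A' ≤ layW l A :=
  sum_le_sum fun j _ => Finset.sup_le fun i _ =>
    (hl _ _ (hpos j) (hle i j)).trans (le_sup (f := fun i => l (A i j)) (mem_univ i₀))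

/-- Every sorted `p × q` layout can be transformed into a `p × q` RC layout
without increasing its width or its height. -/
theorem rc_layout_exists (p q : ℕ) (hp : 0 < p) (hq : 0 < q) (l : ℕ → ℕ)
    (hl : ∀ a b, 1 ≤ a → a ≤ b → l b ≤ l a)
    (A : Fin p → Fin q → ℕ) (hA : IsLayout p q A) (hS : IsSorted A) :
    ∃ A' : Fin p → Fin q → ℕ, IsRC A' ∧
      layW l A' ≤ layW l A ∧ layH l A' ≤ layH l A := by
  obtain ⟨p, rfl⟩ := Nat.exists_eq_add_one_of_ne_zero hp.ne'
  obtain ⟨q, rfl⟩ := Nat.exists_eq_add_one_of_ne_zero hq.ne'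
  obtain ⟨A', hRC, hdom⟩ := (hS.frameBounds hA).exists_isRC
  refine ⟨A', hRC, ?_, ?_⟩
  · exact layW_le_of_row_le hl 0 (fun j => (hA.mem_Icc 0 j).1) fun i j => (hdom i j).1
  · exact layW_le_of_row_le hl (A := fun j i => A i j) (A' := fun j i => A' i j) 0
      (fun i => (hA.mem_Icc i 0).1) fun j i => (hdom i j).2
end

section
/- For any sorted p×q layout A with nonincreasing side lengths, W(A) + H(A) = l_1 + Σ_{k=1}^{p+q−1} l_{v_k}, i.e., the sum of the width and the height equals l_1 plus the total side length of all p+q−1 bottleneck squares. -/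
/-- For a sorted layout with nonincreasing side lengths, the sum of the width
and the height equals `l 1` plus the total side length of all bottleneck squares (the entries
of the first row and the first column). -/
theorem width_add_height_eq_bottleneck_sum (p q : ℕ) (hp : 0 < p) (hq : 0 < q) (l : ℕ → ℕ)
    (hl : ∀ a b, 1 ≤ a → a ≤ b → l b ≤ l a)
    (A : Fin p → Fin q → ℕ) (hA : IsLayout p q A) (hS : IsSorted A) :
    layW l A + layH l A =
      l 1 + ∑ v ∈ ((Finset.univ.image fun i : Fin p => A i ⟨0, hq⟩) ∪
        (Finset.univ.image fun j : Fin q => A ⟨0, hp⟩ j)), l v := by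
  obtain ⟨hinj, hrange⟩ := hA
  obtain ⟨hrow, hcol⟩ := hS
  set i0 : Fin p := ⟨0, hp⟩ with hi0
  set j0 : Fin q := ⟨0, hq⟩ with hj0
  have hmem : ∀ i j, A i j ∈ Set.Icc 1 (p * q) := by
    intro i j; rw [← hrange]; exact ⟨(i, j), rfl⟩
  have h1 : ∀ i j, 1 ≤ A i j := fun i j => (hmem i j).1
  have hle_i : ∀ i j, A i0 j ≤ A i j := fun i j =>
    (hcol j).monotone (Fin.le_def.mpr (Nat.zero_le _))
  have hle_j : ∀ i j, A i j0 ≤ A i j := fun i j =>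
    (hrow i).monotone (Fin.le_def.mpr (Nat.zero_le _))
  have hW : layW l A = ∑ j : Fin q, l (A i0 j) := by
    unfold layW
    refine Finset.sum_congr rfl fun j _ => ?_
    apply le_antisymm
    · exact Finset.sup_le (f := fun i => l (A i j)) fun i _ => hl _ _ (h1 i0 j) (hle_i i j)
    · exact Finset.le_sup (f := fun i => l (A i j)) (Finset.mem_univ i0)
  have hH : layH l A = ∑ i : Fin p, l (A i j0) := by
    unfold layH
    refine Finset.sum_congr rfl fun i _ => ?_
    apply le_antisymm
    · exact Finset.sup_le (f := fun j => l (A i j)) fun j _ => hl _ _ (h1 i j0) (hle_j i j)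
    · exact Finset.le_sup (f := fun j => l (A i j)) (Finset.mem_univ j0)
  have hA00 : A i0 j0 = 1 := by
    have hone : (1 : ℕ) ∈ Set.Icc 1 (p * q) :=
      ⟨le_refl 1, Nat.one_le_iff_ne_zero.mpr (by positivity)⟩
    rw [← hrange] at hone
    obtain ⟨⟨i, j⟩, hij⟩ := hone
    exact le_antisymm (hij ▸ le_trans (hle_i i j0) (hle_j i j)) (h1 i0 j0)
  set s := Finset.univ.image fun i : Fin p => A i j0 with hs
  set t := Finset.univ.image fun j : Fin q => A i0 j with ht
  have hst : s ∩ t = {A i0 j0} := by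
    ext x
    simp only [hs, ht, Finset.mem_inter, Finset.mem_image, Finset.mem_univ, true_and,
      Finset.mem_singleton]
    constructor
    · rintro ⟨⟨i, rfl⟩, ⟨j, hj⟩⟩
      have heq : ((i0, j) : Fin p × Fin q) = (i, j0) := hinj hj
      rw [show i = i0 from ((Prod.ext_iff.mp heq).1).symm]
    · rintro rfl; exact ⟨⟨i0, rfl⟩, ⟨j0, rfl⟩⟩
  have hsum_s : ∑ x ∈ s, l x = ∑ i : Fin p, l (A i j0) := by
    rw [hs, Finset.sum_image]
    intro a _ b _ hab
    exact (hcol j0).injective hab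
  have hsum_t : ∑ x ∈ t, l x = ∑ j : Fin q, l (A i0 j) := by
    rw [ht, Finset.sum_image]
    intro a _ b _ hab
    exact (hrow i0).injective hab
  have key := Finset.sum_union_inter (s₁ := s) (s₂ := t) (f := l)
  rw [hst, Finset.sum_singleton, hA00, hsum_s, hsum_t] at key
  rw [hW, hH]
  omega
end

section
/- For any sorted p×q layout A with nonincreasing side lengths l (with l_k = 0 for k > pq), the sum of its width and height satisfies W(A) + H(A) ≥ l_1 + Σ_{k=1}^{p+q−1} l_{ω(k)}, where ω(k) = (k+1)(k−1)/4 + 1 if k is odd and ω(k) = k²/4 + 1 if k is even. -/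
/-- `ω(k) = (k+1)(k-1)/4 + 1` if `k` is odd, `k²/4 + 1` if `k` is even
(the divisions are exact). -/
def omegaFn (k : ℕ) : ℕ :=
  if k % 2 = 1 then (k + 1) * (k - 1) / 4 + 1 else k ^ 2 / 4 + 1

lemma omegaFn_pos (k : ℕ) : 1 ≤ omegaFn k := by
  unfold omegaFn; split <;> omega

lemma omega_arith (i j : ℕ) (hi : 1 ≤ i) (hj : 1 ≤ j) :
    i * (j - 1) + 1 ≤ omegaFn (i + j - 1) := by
  obtain ⟨a, rfl⟩ : ∃ a, i = a + 1 := ⟨i - 1, by omega⟩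
  obtain ⟨b, rfl⟩ : ∃ b, j = b + 1 := ⟨j - 1, by omega⟩
  have hk : a + 1 + (b + 1) - 1 = a + b + 1 := by omega
  rw [hk, Nat.add_sub_cancel]
  unfold omegaFn
  split_ifs with h
  · have hab : b ≤ a ∨ a + 2 ≤ b := by omega
    have h4 : (a + 1) * b ≤ (a + b + 1 + 1) * (a + b + 1 - 1) / 4 := by
      rw [Nat.le_div_iff_mul_le (by norm_num)]
      have he : a + b + 1 + 1 = a + b + 2 := by omega
      have he2 : a + b + 1 - 1 = a + b := by omega
      rw [he, he2]
      rcases hab with hba | hba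
      · zify; nlinarith [sq_nonneg ((a:ℤ) - b)]
      · zify
        nlinarith [mul_nonneg (by linarith : (0:ℤ) ≤ (b:ℤ) - a - 2)
          (by linarith : (0:ℤ) ≤ (b:ℤ) - a)]
    omega
  · have h4 : (a + 1) * b ≤ (a + b + 1) ^ 2 / 4 := by
      rw [Nat.le_div_iff_mul_le (by norm_num)]
      zify; nlinarith [sq_nonneg ((a:ℤ) - b + 1)]
    omega

lemma card_filter_val_lt (n m : ℕ) (h : m ≤ n) :
    ((Finset.univ : Finset (Fin n)).filter fun r : Fin n => (r : ℕ) < m).card = m := by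
  have e : ((Finset.univ : Finset (Fin n)).filter fun r : Fin n => (r : ℕ) < m)
      = (Finset.range m).attachFin (fun x hx => lt_of_lt_of_le (Finset.mem_range.1 hx) h) := by
    ext r
    simp [Finset.mem_attachFin]
  rw [e, Finset.card_attachFin, Finset.card_range]

lemma filter_mono_char {n : ℕ} {g : Fin n → ℕ} (hg : Monotone g) (v : ℕ) (c : Fin n) :
    g c ≤ v ↔ (c : ℕ) < ((Finset.univ : Finset (Fin n)).filter fun x : Fin n => g x ≤ v).card := by
  constructor
  · intro hc
    have hsub : ((Finset.univ : Finset (Fin n)).filter fun x : Fin n => (x : ℕ) < (c : ℕ) + 1)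
        ⊆ (Finset.univ : Finset (Fin n)).filter fun x : Fin n => g x ≤ v := by
      intro x hx
      simp only [Finset.mem_filter, Finset.mem_univ, true_and] at hx ⊢
      exact le_trans (hg (by omega : x ≤ c)) hc
    have := Finset.card_le_card hsub
    rwa [card_filter_val_lt n ((c : ℕ) + 1) c.2] at this
  · intro hc
    by_contra hgc
    have hsub : ((Finset.univ : Finset (Fin n)).filter fun x : Fin n => g x ≤ v)
        ⊆ (Finset.univ : Finset (Fin n)).filter fun x : Fin n => (x : ℕ) < (c : ℕ) := by
      intro x hx
      simp only [Finset.mem_filter, Finset.mem_univ, true_and] at hx ⊢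
      by_contra hxc
      exact hgc (le_trans (hg (by omega : c ≤ x)) hx)
    have := Finset.card_le_card hsub
    rw [card_filter_val_lt n (c : ℕ) (le_of_lt c.2)] at this
    omega

/-- For a sorted `p × q` layout with nonincreasing side lengths
(`l k = 0` for `k > p*q`), `W(A) + H(A) ≥ l 1 + Σ_{k=1}^{p+q-1} l (ω k)`. -/
theorem width_add_height_lower_bound (p q : ℕ) (l : ℕ → ℕ)
    (hl : ∀ a b, 1 ≤ a → a ≤ b → l b ≤ l a)
    (hzero : ∀ k, p * q < k → l k = 0)
    (A : Fin p → Fin q → ℕ) (hA : IsLayout p q A) (hS : IsSorted A) :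
    l 1 + ∑ k ∈ Finset.Icc 1 (p + q - 1), l (omegaFn k) ≤ layW l A + layH l A := by
  rcases Nat.eq_zero_or_pos p with hp | hp
  · have h1 : l 1 = 0 := hzero 1 (by simp [hp])
    have h2 : ∑ k ∈ Finset.Icc 1 (p + q - 1), l (omegaFn k) = 0 :=
      Finset.sum_eq_zero fun k _ => hzero _ (by have := omegaFn_pos k; simp [hp]; omega)
    rw [h1, h2]
    exact Nat.zero_le _
  rcases Nat.eq_zero_or_pos q with hq | hq
  · have h1 : l 1 = 0 := hzero 1 (by simp [hq])
    have h2 : ∑ k ∈ Finset.Icc 1 (p + q - 1), l (omegaFn k) = 0 :=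
      Finset.sum_eq_zero fun k _ => hzero _ (by have := omegaFn_pos k; simp [hq]; omega)
    rw [h1, h2]
    exact Nat.zero_le _
  obtain ⟨hinj, hrange⟩ := hA
  set f : Fin p × Fin q → ℕ := fun x => A x.1 x.2 with hf
  have himg : Finset.univ.image f = Finset.Icc 1 (p * q) := by
    apply Finset.coe_injective
    rw [Finset.coe_image, Finset.coe_univ, Set.image_univ, Finset.coe_Icc]
    exact hrange
  set z0 : Fin p := ⟨0, hp⟩ with hz0
  set w0 : Fin q := ⟨0, hq⟩ with hw0
  have hpq : 1 ≤ p * q := Nat.mul_pos hp hq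
  have hmemIcc : ∀ x : Fin p × Fin q, f x ∈ Finset.Icc 1 (p * q) := fun x =>
    himg ▸ Finset.mem_image_of_mem f (Finset.mem_univ x)
  have hA00 : A z0 w0 = 1 := by
    obtain ⟨x, hx⟩ : ∃ x, f x = 1 := by
      have h1 : (1 : ℕ) ∈ Finset.univ.image f := himg ▸ Finset.mem_Icc.2 ⟨le_refl 1, hpq⟩
      obtain ⟨x, _, hx⟩ := Finset.mem_image.1 h1
      exact ⟨x, hx⟩
    have h1 : A z0 w0 ≤ f x := by
      calc A z0 w0 ≤ A x.1 w0 := (hS.2 w0).monotone (Fin.le_def.2 (Nat.zero_le _))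
        _ ≤ A x.1 x.2 := (hS.1 x.1).monotone (Fin.le_def.2 (Nat.zero_le _))
    have h2 : 1 ≤ A z0 w0 := (Finset.mem_Icc.1 (hmemIcc (z0, w0))).1
    omega
  set gR : Fin q → ℕ := fun c => A z0 c with hgR
  set gC : Fin p → ℕ := fun r => A r w0 with hgC
  have hgRmono : Monotone gR := (hS.1 z0).monotone
  have hgCmono : Monotone gC := (hS.2 w0).monotone
  have hgRinj : Function.Injective gR := (hS.1 z0).injective
  have hgCinj : Function.Injective gC := (hS.2 w0).injective
  set R : Finset ℕ := Finset.univ.image gR with hR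
  set C : Finset ℕ := Finset.univ.image gC with hC
  set V : Finset ℕ := R ∪ C with hV
  have hRC : R ∩ C = {1} := by
    ext m
    simp only [hR, hC, Finset.mem_inter, Finset.mem_image, Finset.mem_univ, true_and,
      Finset.mem_singleton]
    constructor
    · rintro ⟨⟨c, hc⟩, ⟨r, hr⟩⟩
      have heq : f (z0, c) = f (r, w0) := by simp only [hf]; rw [show A z0 c = gR c from rfl, hc,
        show A r w0 = gC r from rfl, hr]
      have := hinj heq
      have hc0 : c = w0 := by
        have := congrArg Prod.snd this
        simpa using this
      rw [← hc, hc0]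
      exact hA00
    · rintro rfl
      exact ⟨⟨w0, hA00⟩, ⟨z0, hA00⟩⟩
  have hRcard : R.card = q := by
    rw [hR, Finset.card_image_of_injective _ hgRinj, Finset.card_univ, Fintype.card_fin]
  have hCcard : C.card = p := by
    rw [hC, Finset.card_image_of_injective _ hgCinj, Finset.card_univ, Fintype.card_fin]
  have hVcard : V.card = p + q - 1 := by
    have h : V.card + (R ∩ C).card = R.card + C.card := Finset.card_union_add_card_inter R C
    rw [hRC, hRcard, hCcard, Finset.card_singleton] at h
    omega
  have hv1V : ∀ v ∈ V, v ∈ Finset.Icc 1 (p * q) := by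
    intro v hv
    rcases Finset.mem_union.1 hv with h | h
    · obtain ⟨c, -, rfl⟩ := Finset.mem_image.1 h
      exact hmemIcc (z0, c)
    · obtain ⟨r, -, rfl⟩ := Finset.mem_image.1 h
      exact hmemIcc (r, w0)
  -- the key bound: each hook value is at most omegaFn of its rank
  have key : ∀ v ∈ V, v ≤ omegaFn ((V.filter (· ≤ v)).card) := by
    intro v hv
    obtain ⟨hv1, hvpq⟩ := Finset.mem_Icc.1 (hv1V v hv)
    set j := ((Finset.univ : Finset (Fin q)).filter fun x : Fin q => gR x ≤ v).card with hjdef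
    set i := ((Finset.univ : Finset (Fin p)).filter fun x : Fin p => gC x ≤ v).card with hidef
    have charR : ∀ c : Fin q, gR c ≤ v ↔ (c : ℕ) < j := fun c => filter_mono_char hgRmono v c
    have charC : ∀ r : Fin p, gC r ≤ v ↔ (r : ℕ) < i := fun r => filter_mono_char hgCmono v r
    have hj1 : 1 ≤ j := by
      have := (charR w0).1 (by rw [show gR w0 = 1 from hA00]; exact hv1)
      omega
    have hi1 : 1 ≤ i := by
      have := (charC z0).1 (by rw [show gC z0 = 1 from hA00]; exact hv1)
      omega
    have hjq : j ≤ q := by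
      have := Finset.card_filter_le (Finset.univ : Finset (Fin q)) fun x : Fin q => gR x ≤ v
      simpa using this
    have hip : i ≤ p := by
      have := Finset.card_filter_le (Finset.univ : Finset (Fin p)) fun x : Fin p => gC x ≤ v
      simpa using this
    have hrank : (V.filter (· ≤ v)).card + 1 = i + j := by
      have hsplit : V.filter (· ≤ v) = R.filter (· ≤ v) ∪ C.filter (· ≤ v) :=
        Finset.filter_union _ _ _
      have hint : R.filter (· ≤ v) ∩ C.filter (· ≤ v) = {1} := by
        rw [← Finset.filter_inter_distrib, hRC, Finset.filter_singleton, if_pos hv1]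
      have hcR : (R.filter (· ≤ v)).card = j := by
        rw [hR, Finset.filter_image, Finset.card_image_of_injective _ hgRinj]
      have hcC : (C.filter (· ≤ v)).card = i := by
        rw [hC, Finset.filter_image, Finset.card_image_of_injective _ hgCinj]
      have h2 := Finset.card_union_add_card_inter (R.filter (· ≤ v)) (C.filter (· ≤ v))
      rw [hint, hcR, hcC, Finset.card_singleton, ← hsplit] at h2
      omega
    have hcount : (Finset.univ.filter fun x : Fin p × Fin q => f x < v).card + 1 = v := by
      have himgf : (Finset.univ.filter fun x : Fin p × Fin q => f x < v).image f
          = (Finset.Icc 1 (p * q)).filter (· < v) := by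
        rw [← himg, Finset.filter_image]
      have hic : (Finset.Icc 1 (p * q)).filter (· < v) = Finset.Icc 1 (v - 1) := by
        ext m
        simp only [Finset.mem_filter, Finset.mem_Icc]
        omega
      have hcard : ((Finset.univ.filter fun x : Fin p × Fin q => f x < v).image f).card
          = (Finset.univ.filter fun x : Fin p × Fin q => f x < v).card :=
        Finset.card_image_of_injective _ hinj
      rw [himgf, hic, Nat.card_Icc] at hcard
      omega
    have hrankeq : (V.filter (· ≤ v)).card = i + j - 1 := by omega
    rw [hrankeq]
    rcases Finset.mem_union.1 hv with hvR | hvC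
    · -- v is in the first row
      obtain ⟨cm, -, hcm⟩ := Finset.mem_image.1 hvR
      have hcmj : (cm : ℕ) < j := (charR cm).1 (le_of_eq hcm)
      have hcmval : (cm : ℕ) + 1 = j := by
        by_contra hne
        have hc' : (cm : ℕ) + 1 < q := by omega
        have hmem := (charR ⟨(cm : ℕ) + 1, hc'⟩).2 (by simpa using by omega)
        have hlt2 : gR cm < gR ⟨(cm : ℕ) + 1, hc'⟩ := (hS.1 z0) (by simp [Fin.lt_def])
        rw [hcm] at hlt2
        omega
      have hsub : (Finset.univ.filter fun x : Fin p × Fin q => f x < v)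
          ⊆ ((Finset.univ : Finset (Fin p)).filter fun r : Fin p => (r : ℕ) < i) ×ˢ
            ((Finset.univ : Finset (Fin q)).filter fun c : Fin q => (c : ℕ) < (cm : ℕ)) := by
        rintro ⟨r, c⟩ hx
        simp only [Finset.mem_filter, Finset.mem_univ, true_and, Finset.mem_product] at hx ⊢
        have hx' : A r c < v := hx
        have hrow : A r w0 ≤ A r c := (hS.1 r).monotone (Fin.le_def.2 (Nat.zero_le _))
        have hcol : A z0 c ≤ A r c := (hS.2 c).monotone (Fin.le_def.2 (Nat.zero_le _))
        have hri : (r : ℕ) < i := (charC r).1 (le_trans hrow (le_of_lt hx'))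
        have hcj : (c : ℕ) < j := (charR c).1 (le_trans hcol (le_of_lt hx'))
        refine ⟨hri, ?_⟩
        rcases Nat.lt_or_ge (c : ℕ) (cm : ℕ) with hlt | hge
        · exact hlt
        · exfalso
          have hceq : c = cm := Fin.ext (by omega)
          have hvle : v ≤ A r c := by
            rw [hceq, ← hcm]
            exact (hS.2 cm).monotone (Fin.le_def.2 (Nat.zero_le _))
          omega
      have hb := Finset.card_le_card hsub
      rw [Finset.card_product, card_filter_val_lt p i hip,
        card_filter_val_lt q (cm : ℕ) (le_of_lt cm.2)] at hb
      have hjm : (cm : ℕ) = j - 1 := by omega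
      rw [hjm] at hb
      have harith := omega_arith i j hi1 hj1
      omega
    · -- v is in the first column
      obtain ⟨rm, -, hrm⟩ := Finset.mem_image.1 hvC
      have hrmi : (rm : ℕ) < i := (charC rm).1 (le_of_eq hrm)
      have hrmval : (rm : ℕ) + 1 = i := by
        by_contra hne
        have hr' : (rm : ℕ) + 1 < p := by omega
        have hmem := (charC ⟨(rm : ℕ) + 1, hr'⟩).2 (by simpa using by omega)
        have hlt2 : gC rm < gC ⟨(rm : ℕ) + 1, hr'⟩ := (hS.2 w0) (by simp [Fin.lt_def])
        rw [hrm] at hlt2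
        omega
      have hsub : (Finset.univ.filter fun x : Fin p × Fin q => f x < v)
          ⊆ ((Finset.univ : Finset (Fin p)).filter fun r : Fin p => (r : ℕ) < (rm : ℕ)) ×ˢ
            ((Finset.univ : Finset (Fin q)).filter fun c : Fin q => (c : ℕ) < j) := by
        rintro ⟨r, c⟩ hx
        simp only [Finset.mem_filter, Finset.mem_univ, true_and, Finset.mem_product] at hx ⊢
        have hx' : A r c < v := hx
        have hrow : A r w0 ≤ A r c := (hS.1 r).monotone (Fin.le_def.2 (Nat.zero_le _))
        have hcol : A z0 c ≤ A r c := (hS.2 c).monotone (Fin.le_def.2 (Nat.zero_le _))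
        have hri : (r : ℕ) < i := (charC r).1 (le_trans hrow (le_of_lt hx'))
        have hcj : (c : ℕ) < j := (charR c).1 (le_trans hcol (le_of_lt hx'))
        refine ⟨?_, hcj⟩
        rcases Nat.lt_or_ge (r : ℕ) (rm : ℕ) with hlt | hge
        · exact hlt
        · exfalso
          have hreq : r = rm := Fin.ext (by omega)
          have hvle : v ≤ A r c := by
            rw [hreq, ← hrm]
            exact (hS.1 rm).monotone (Fin.le_def.2 (Nat.zero_le _))
          omega
      have hb := Finset.card_le_card hsub
      rw [Finset.card_product, card_filter_val_lt p (rm : ℕ) (le_of_lt rm.2),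
        card_filter_val_lt q j hjq] at hb
      have him : (rm : ℕ) = i - 1 := by omega
      rw [him] at hb
      have harith := omega_arith j i hj1 hi1
      rw [show j + i - 1 = i + j - 1 by omega] at harith
      rw [show (i - 1) * j = j * (i - 1) by ring] at hb
      omega
  -- rank is strictly monotone on V, hence injective, and its image is Icc 1 (p+q-1)
  have hrankmono : ∀ v ∈ V, ∀ w ∈ V, v < w →
      (V.filter (· ≤ v)).card < (V.filter (· ≤ w)).card := by
    intro v hv w hw hvw
    apply Finset.card_lt_card
    constructor
    · intro x hx
      simp only [Finset.mem_filter] at hx ⊢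
      exact ⟨hx.1, le_trans hx.2 (le_of_lt hvw)⟩
    · intro hcon
      have hw' : w ∈ V.filter (· ≤ v) := hcon (Finset.mem_filter.2 ⟨hw, le_refl w⟩)
      have := (Finset.mem_filter.1 hw').2
      omega
  have hrankinj : Set.InjOn (fun v => (V.filter (· ≤ v)).card) V := by
    intro v hv w hw h
    by_contra hne
    rcases lt_or_gt_of_ne hne with hlt | hlt
    · have := hrankmono v hv w hw hlt
      simp only at h
      omega
    · have := hrankmono w hw v hv hlt
      simp only at h
      omega
  have hrankmem : ∀ v ∈ V, (V.filter (· ≤ v)).card ∈ Finset.Icc 1 (p + q - 1) := by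
    intro v hv
    refine Finset.mem_Icc.2 ⟨?_, ?_⟩
    · exact Finset.card_pos.2 ⟨v, Finset.mem_filter.2 ⟨hv, le_refl v⟩⟩
    · calc (V.filter (· ≤ v)).card ≤ V.card := Finset.card_le_card (Finset.filter_subset _ _)
        _ = p + q - 1 := hVcard
  have himgrank : V.image (fun v => (V.filter (· ≤ v)).card) = Finset.Icc 1 (p + q - 1) := by
    apply Finset.eq_of_subset_of_card_le
    · intro k hk
      obtain ⟨v, hv, rfl⟩ := Finset.mem_image.1 hk
      exact hrankmem v hv
    · rw [Finset.card_image_of_injOn hrankinj, hVcard, Nat.card_Icc]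
      omega
  have hsum1 : ∑ k ∈ Finset.Icc 1 (p + q - 1), l (omegaFn k) ≤ ∑ v ∈ V, l v := by
    rw [← himgrank, Finset.sum_image fun x hx y hy h => hrankinj hx hy h]
    apply Finset.sum_le_sum
    intro v hv
    exact hl v (omegaFn ((V.filter (· ≤ v)).card))
      (Finset.mem_Icc.1 (hv1V v hv)).1 (key v hv)
  have hW : ∑ c : Fin q, l (A z0 c) ≤ layW l A := by
    unfold layW
    apply Finset.sum_le_sum
    intro c _
    exact Finset.le_sup (f := fun i : Fin p => l (A i c)) (Finset.mem_univ z0)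
  have hH : ∑ r : Fin p, l (A r w0) ≤ layH l A := by
    unfold layH
    apply Finset.sum_le_sum
    intro r _
    exact Finset.le_sup (f := fun j : Fin q => l (A r j)) (Finset.mem_univ w0)
  have hsplit : (∑ c : Fin q, l (A z0 c)) + (∑ r : Fin p, l (A r w0))
      = (∑ v ∈ V, l v) + l 1 := by
    have e1 : ∑ c : Fin q, l (A z0 c) = ∑ v ∈ R, l v :=
      (Finset.sum_image fun x _ y _ h => hgRinj h).symm
    have e2 : ∑ r : Fin p, l (A r w0) = ∑ v ∈ C, l v :=
      (Finset.sum_image fun x _ y _ h => hgCinj h).symm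
    rw [e1, e2, ← Finset.sum_union_inter, hRC, Finset.sum_singleton]
  calc l 1 + ∑ k ∈ Finset.Icc 1 (p + q - 1), l (omegaFn k)
      ≤ l 1 + ∑ v ∈ V, l v := by omega
    _ = (∑ c : Fin q, l (A z0 c)) + (∑ r : Fin p, l (A r w0)) := by rw [hsplit]; omega
    _ ≤ layW l A + layH l A := Nat.add_le_add hW hH
end

section
/- Lower bound in the strong NP-hardness reduction for the SIPP with only horizontal partitions: let c be a positive integer, q_1,…,q_{3c} positive integers with Σ_{j=1}^{3c} q_j = cB and B/4 < q_j < B/2 for all j, and consider the 4c squares with side lengths l_i = B+1 for i = 1,…,c and the remaining 3c squares with side lengths q_1,…,q_{3c}, to be packed into a strip of width b = 2B+1. Then every packing of all 4c squares into rows (each row of total side length at most b) has height at least c(B+1). -/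
/-- Lower bound in the strong NP-hardness reduction for the SIPP with only
horizontal partitions: for the 3-partition instance `q_1, …, q_{3c}` (with `Σ q_j = c·B` and
`B/4 < q_j < B/2`), every packing of the `4c` squares (`c` squares of side `B+1` and the `3c`
squares of sides `q_j`) into rows of total side length at most `2B+1` has height at least
`c(B+1)`. Rows are described by an assignment `f` of squares `1, …, 4c` to rows `1, …, r`. -/
theorem sipp_h_lower_bound (c B : ℕ) (hc : 0 < c) (q : ℕ → ℕ)
    (hqpos : ∀ j, 1 ≤ j → j ≤ 3 * c → 0 < q j)
    (hsum : ∑ j ∈ Finset.Icc 1 (3 * c), q j = c * B)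
    (hbound : ∀ j, 1 ≤ j → j ≤ 3 * c → B < 4 * q j ∧ 2 * q j < B)
    (l : ℕ → ℕ)
    (hl1 : ∀ i, 1 ≤ i → i ≤ c → l i = B + 1)
    (hl2 : ∀ i, c < i → i ≤ 4 * c → l i = q (i - c))
    (r : ℕ) (f : ℕ → ℕ)
    (hf : ∀ j, 1 ≤ j → j ≤ 4 * c → f j ∈ Finset.Icc 1 r)
    (hne : ∀ i, 1 ≤ i → i ≤ r → ∃ j, 1 ≤ j ∧ j ≤ 4 * c ∧ f j = i)
    (hwidth : ∀ i, 1 ≤ i → i ≤ r →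
      ∑ j ∈ (Finset.Icc 1 (4 * c)).filter (fun j => f j = i), l j ≤ 2 * B + 1) :
    c * (B + 1) ≤
      ∑ i ∈ Finset.Icc 1 r, ((Finset.Icc 1 (4 * c)).filter (fun j => f j = i)).sup l := by
  -- each j in Icc 1 c is also in Icc 1 (4c)
  have hsub : ∀ j ∈ Finset.Icc 1 c, j ∈ Finset.Icc 1 (4 * c) := by
    intro j hj
    simp only [Finset.mem_Icc] at hj ⊢
    omega
  -- f is injective on the big squares
  have hinj : Set.InjOn f (Finset.Icc 1 c) := by
    intro j₁ hj₁ j₂ hj₂ hfe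
    by_contra hne'
    have hj₁' := Finset.mem_Icc.mp hj₁
    have hj₂' := Finset.mem_Icc.mp hj₂
    have hfr := hf j₁ hj₁'.1 (by omega)
    have hfr' := Finset.mem_Icc.mp hfr
    have hw := hwidth (f j₁) hfr'.1 hfr'.2
    have hpair : ({j₁, j₂} : Finset ℕ) ⊆
        (Finset.Icc 1 (4 * c)).filter (fun j => f j = f j₁) := by
      intro x hx
      simp only [Finset.mem_insert, Finset.mem_singleton] at hx
      rcases hx with rfl | rfl
      · exact Finset.mem_filter.mpr ⟨Finset.mem_Icc.mpr ⟨hj₁'.1, by omega⟩, rfl⟩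
      · exact Finset.mem_filter.mpr ⟨Finset.mem_Icc.mpr ⟨hj₂'.1, by omega⟩, hfe.symm⟩
    have hps : ∑ j ∈ ({j₁, j₂} : Finset ℕ), l j ≤
        ∑ j ∈ (Finset.Icc 1 (4 * c)).filter (fun j => f j = f j₁), l j :=
      Finset.sum_le_sum_of_subset hpair
    rw [Finset.sum_pair hne'] at hps
    rw [hl1 j₁ hj₁'.1 hj₁'.2, hl1 j₂ hj₂'.1 hj₂'.2] at hps
    omega
  -- the image of the big squares
  set S := (Finset.Icc 1 c).image f with hS
  have hcard : S.card = c := by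
    rw [hS, Finset.card_image_of_injOn hinj, Nat.card_Icc]; omega
  have hSsub : S ⊆ Finset.Icc 1 r := by
    intro i hi
    simp only [hS, Finset.mem_image, Finset.mem_Icc] at hi
    obtain ⟨j, hj, rfl⟩ := hi
    exact hf j hj.1 (by omega)
  have hbig : ∀ i ∈ S, B + 1 ≤ ((Finset.Icc 1 (4 * c)).filter (fun j => f j = i)).sup l := by
    intro i hi
    simp only [hS, Finset.mem_image, Finset.mem_Icc] at hi
    obtain ⟨j, hj, rfl⟩ := hi
    have hjmem : j ∈ (Finset.Icc 1 (4 * c)).filter (fun j' => f j' = f j) := by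
      exact Finset.mem_filter.mpr ⟨Finset.mem_Icc.mpr ⟨hj.1, by omega⟩, rfl⟩
    calc B + 1 = l j := (hl1 j hj.1 hj.2).symm
      _ ≤ _ := Finset.le_sup hjmem
  calc c * (B + 1) = ∑ i ∈ S, (B + 1) := by rw [Finset.sum_const, hcard, smul_eq_mul]
    _ ≤ ∑ i ∈ S, ((Finset.Icc 1 (4 * c)).filter (fun j => f j = i)).sup l :=
        Finset.sum_le_sum hbig
    _ ≤ _ := Finset.sum_le_sum_of_subset hSsub
end

section
/- Equivalence in the strong NP-hardness reduction for the SIPP with only horizontal partitions: let c be a positive integer, q_1,…,q_{3c} positive integers with Σ_{j=1}^{3c} q_j = cB and B/4 < q_j < B/2 for all j, and consider the 4c squares with side lengths l_i = B+1 for i = 1,…,c and the remaining 3c squares with side lengths q_1,…,q_{3c}, with strip width b = 2B+1. Then there exists a packing of all 4c squares into rows with height exactly c(B+1) if and only if {1,…,3c} can be partitioned into c sets M_1,…,M_c with Σ_{j∈M_i} q_j = B for every i. -/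
lemma sippH_shift (c : ℕ) (F : ℕ → ℕ) (P : ℕ → Prop) [DecidablePred P] :
    ∑ j ∈ (Finset.Icc (c+1) (4*c)).filter (fun j => P j), F j
      = ∑ j ∈ (Finset.Icc 1 (3*c)).filter (fun j => P (j + c)), F (j + c) := by
  apply Finset.sum_nbij' (fun j => j - c) (fun j => j + c)
  · intro a ha
    simp only [Finset.mem_filter, Finset.mem_Icc] at ha ⊢
    refine ⟨by omega, ?_⟩
    rw [show a - c + c = a by omega]; exact ha.2
  · intro a ha
    simp only [Finset.mem_filter, Finset.mem_Icc] at ha ⊢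
    exact ⟨by omega, ha.2⟩
  · intro a ha
    simp only [Finset.mem_filter, Finset.mem_Icc] at ha
    omega
  · intro a _; omega
  · intro a ha
    simp only [Finset.mem_filter, Finset.mem_Icc] at ha
    rw [show a - c + c = a by omega]

lemma sippH_split (c : ℕ) (F : ℕ → ℕ) (P : ℕ → Prop) [DecidablePred P] :
    ∑ j ∈ (Finset.Icc 1 (4*c)).filter P, F j
      = ∑ j ∈ (Finset.Icc 1 c).filter P, F j
        + ∑ j ∈ (Finset.Icc (c+1) (4*c)).filter P, F j := by
  have h : Finset.Icc 1 (4*c) = Finset.Icc 1 c ∪ Finset.Icc (c+1) (4*c) := by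
    ext j; simp only [Finset.mem_union, Finset.mem_Icc]; omega
  rw [h, Finset.filter_union, Finset.sum_union]
  exact Finset.disjoint_filter_filter (by
    simp only [Finset.disjoint_left, Finset.mem_Icc]; omega)

/-- Equivalence in the strong NP-hardness reduction for the SIPP with only
horizontal partitions: for the 3-partition instance `q_1, …, q_{3c}` (with `Σ q_j = c·B` and
`B/4 < q_j < B/2`), the `4c` squares (`c` squares of side `B+1` and the `3c` squares of sides
`q_j`) can be packed into rows of total side length at most `2B+1` with total height exactly
`c(B+1)` if and only if `{1, …, 3c}` can be partitioned into `c` sets each of `q`-sum `B`.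
Rows are described by an assignment `f` of squares `1, …, 4c` to rows `1, …, r`, and the
partition by an assignment `g` of `{1, …, 3c}` to `{1, …, c}`. -/
theorem sipp_h_reduction_iff (c B : ℕ) (hc : 0 < c) (q : ℕ → ℕ)
    (hqpos : ∀ j, 1 ≤ j → j ≤ 3 * c → 0 < q j)
    (hsum : ∑ j ∈ Finset.Icc 1 (3 * c), q j = c * B)
    (hbound : ∀ j, 1 ≤ j → j ≤ 3 * c → B < 4 * q j ∧ 2 * q j < B)
    (l : ℕ → ℕ)
    (hl1 : ∀ i, 1 ≤ i → i ≤ c → l i = B + 1)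
    (hl2 : ∀ i, c < i → i ≤ 4 * c → l i = q (i - c)) :
    (∃ (r : ℕ) (f : ℕ → ℕ),
      (∀ j, 1 ≤ j → j ≤ 4 * c → f j ∈ Finset.Icc 1 r) ∧
      (∀ i, 1 ≤ i → i ≤ r → ∃ j, 1 ≤ j ∧ j ≤ 4 * c ∧ f j = i) ∧
      (∀ i, 1 ≤ i → i ≤ r →
        ∑ j ∈ (Finset.Icc 1 (4 * c)).filter (fun j => f j = i), l j ≤ 2 * B + 1) ∧
      ∑ i ∈ Finset.Icc 1 r, ((Finset.Icc 1 (4 * c)).filter (fun j => f j = i)).sup l =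
        c * (B + 1)) ↔
    (∃ g : ℕ → ℕ,
      (∀ j, 1 ≤ j → j ≤ 3 * c → g j ∈ Finset.Icc 1 c) ∧
      (∀ i, 1 ≤ i → i ≤ c →
        ∑ j ∈ (Finset.Icc 1 (3 * c)).filter (fun j => g j = i), q j = B)) := by
  constructor
  · -- Forward direction
    rintro ⟨r, f, hf1, hf2, hf3, hf4⟩
    -- f is injective on big squares
    have hinj : ∀ t₁, t₁ ∈ Finset.Icc 1 c → ∀ t₂, t₂ ∈ Finset.Icc 1 c →
        f t₁ = f t₂ → t₁ = t₂ := by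
      intro t₁ ht₁ t₂ ht₂ hft
      by_contra hne
      simp only [Finset.mem_Icc] at ht₁ ht₂
      have hm : f t₁ ∈ Finset.Icc 1 r := hf1 t₁ ht₁.1 (by omega)
      simp only [Finset.mem_Icc] at hm
      have hw := hf3 (f t₁) hm.1 hm.2
      have hsub : ({t₁, t₂} : Finset ℕ) ⊆
          (Finset.Icc 1 (4*c)).filter (fun j => f j = f t₁) := by
        intro x hx
        simp only [Finset.mem_insert, Finset.mem_singleton] at hx
        simp only [Finset.mem_filter, Finset.mem_Icc]
        rcases hx with rfl | rfl
        · exact ⟨⟨ht₁.1, by omega⟩, rfl⟩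
        · exact ⟨⟨ht₂.1, by omega⟩, hft.symm⟩
      have hle : l t₁ + l t₂ ≤
          ∑ j ∈ (Finset.Icc 1 (4*c)).filter (fun j => f j = f t₁), l j := by
        rw [← Finset.sum_pair hne]
        exact Finset.sum_le_sum_of_subset hsub
      rw [hl1 t₁ ht₁.1 ht₁.2, hl1 t₂ ht₂.1 ht₂.2] at hle
      omega
    set T : Finset ℕ := (Finset.Icc 1 c).image f with hT
    have hcardT : T.card = c := by
      rw [hT, Finset.card_image_of_injOn hinj, Nat.card_Icc]; omega
    have hTsub : T ⊆ Finset.Icc 1 r := by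
      intro i hi
      rw [hT, Finset.mem_image] at hi
      obtain ⟨t, ht, rfl⟩ := hi
      simp only [Finset.mem_Icc] at ht
      exact hf1 t ht.1 (by omega)
    have hhT : ∀ i ∈ T, B + 1 ≤ ((Finset.Icc 1 (4*c)).filter (fun j => f j = i)).sup l := by
      intro i hi
      rw [hT, Finset.mem_image] at hi
      obtain ⟨t, ht, rfl⟩ := hi
      simp only [Finset.mem_Icc] at ht
      have hmem : t ∈ (Finset.Icc 1 (4*c)).filter (fun j => f j = f t) :=
        Finset.mem_filter.mpr ⟨Finset.mem_Icc.mpr ⟨ht.1, by omega⟩, rfl⟩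
      calc B + 1 = l t := (hl1 t ht.1 ht.2).symm
        _ ≤ _ := Finset.le_sup hmem
    have hh1 : ∀ i ∈ Finset.Icc 1 r,
        1 ≤ ((Finset.Icc 1 (4*c)).filter (fun j => f j = i)).sup l := by
      intro i hi
      simp only [Finset.mem_Icc] at hi
      obtain ⟨j, hj1, hj2, hj3⟩ := hf2 i hi.1 hi.2
      have hmem : j ∈ (Finset.Icc 1 (4*c)).filter (fun j => f j = i) := by
        simp only [Finset.mem_filter, Finset.mem_Icc]
        exact ⟨⟨hj1, hj2⟩, hj3⟩
      have hlj : 1 ≤ l j := by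
        by_cases h : j ≤ c
        · rw [hl1 j hj1 h]; omega
        · rw [hl2 j (by omega) hj2]
          exact hqpos (j - c) (by omega) (by omega)
      exact hlj.trans (Finset.le_sup hmem)
    -- r = c and T = Icc 1 c
    have hsplit := Finset.sum_sdiff (f := fun i =>
      ((Finset.Icc 1 (4*c)).filter (fun j => f j = i)).sup l) hTsub
    beta_reduce at hsplit
    have hge1 : c * (B + 1) ≤ ∑ i ∈ T,
        ((Finset.Icc 1 (4*c)).filter (fun j => f j = i)).sup l := by
      calc c * (B + 1) = ∑ _i ∈ T, (B + 1) := by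
            rw [Finset.sum_const, hcardT, smul_eq_mul]
        _ ≤ _ := Finset.sum_le_sum hhT
    have hge2 : (Finset.Icc 1 r \ T).card ≤ ∑ i ∈ Finset.Icc 1 r \ T,
        ((Finset.Icc 1 (4*c)).filter (fun j => f j = i)).sup l := by
      calc (Finset.Icc 1 r \ T).card = ∑ _i ∈ Finset.Icc 1 r \ T, 1 := by
            rw [Finset.sum_const, smul_eq_mul, mul_one]
        _ ≤ _ := Finset.sum_le_sum (fun i hi => hh1 i (Finset.mem_sdiff.mp hi).1)
    have hcard0 : (Finset.Icc 1 r \ T).card = 0 := by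
      rw [hf4] at hsplit; omega
    have hTeq : T = Finset.Icc 1 r := by
      apply Finset.eq_of_subset_of_card_le hTsub
      have := Finset.card_sdiff_of_subset hTsub
      omega
    have hrc : r = c := by
      have := hTeq ▸ hcardT
      rw [Nat.card_Icc] at this; omega
    rw [hrc] at hf1 hf2 hf3 hf4 hTeq
    -- small sums per row
    set s : ℕ → ℕ := fun i =>
      ∑ j ∈ (Finset.Icc (c+1) (4*c)).filter (fun j => f j = i), l j with hs
    have hrow : ∀ i ∈ Finset.Icc 1 c, s i ≤ B := by
      intro i hi
      simp only [Finset.mem_Icc] at hi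
      have hw := hf3 i hi.1 hi.2
      rw [sippH_split c l (fun j => f j = i)] at hw
      -- big part: exactly one big square mapped to i
      have hiT : i ∈ T := hTeq ▸ (Finset.mem_Icc.mpr hi)
      rw [hT, Finset.mem_image] at hiT
      obtain ⟨t, ht, hft⟩ := hiT
      have hbigfilter : (Finset.Icc 1 c).filter (fun j => f j = i) = {t} := by
        ext j
        simp only [Finset.mem_filter, Finset.mem_singleton]
        constructor
        · rintro ⟨hj, hfj⟩
          exact hinj j hj t ht (hfj.trans hft.symm)
        · rintro rfl
          exact ⟨ht, hft⟩
      rw [hbigfilter, Finset.sum_singleton] at hw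
      simp only [Finset.mem_Icc] at ht
      rw [hl1 t ht.1 ht.2] at hw
      simp only [hs]
      omega
    have hmaps : ∀ j ∈ Finset.Icc (c+1) (4*c), f j ∈ Finset.Icc 1 c := by
      intro j hj
      simp only [Finset.mem_Icc] at hj
      exact hf1 j (by omega) hj.2
    have htot : ∑ i ∈ Finset.Icc 1 c, s i = c * B := by
      have h1 := Finset.sum_fiberwise_of_maps_to hmaps l
      simp only [hs]
      rw [h1, ← Finset.filter_true (Finset.Icc (c+1) (4*c)),
        sippH_shift c l (fun _ => True)]
      rw [Finset.filter_true]
      rw [← hsum]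
      apply Finset.sum_congr rfl
      intro j hj
      simp only [Finset.mem_Icc] at hj
      rw [hl2 (j + c) (by omega) (by omega)]
      congr 1
      omega
    have heach : ∀ i ∈ Finset.Icc 1 c, s i = B := by
      intro i hi
      by_contra hne
      have hlt : s i < B := lt_of_le_of_ne (hrow i hi) hne
      have : ∑ i ∈ Finset.Icc 1 c, s i < ∑ _i ∈ Finset.Icc 1 c, B :=
        Finset.sum_lt_sum (fun j hj => hrow j hj) ⟨i, hi, hlt⟩
      rw [htot, Finset.sum_const, Nat.card_Icc, smul_eq_mul, Nat.add_sub_cancel] at this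
      omega
    refine ⟨fun j => f (j + c), ?_, ?_⟩
    · intro j hj1 hj2
      exact hf1 (j + c) (by omega) (by omega)
    · intro i hi1 hi2
      have := heach i (Finset.mem_Icc.mpr ⟨hi1, hi2⟩)
      rw [← this, hs]
      simp only
      rw [sippH_shift c l (fun j => f j = i)]
      apply Finset.sum_congr rfl
      intro j hj
      simp only [Finset.mem_filter, Finset.mem_Icc] at hj
      rw [hl2 (j + c) (by omega) (by omega)]
      congr 1
      omega
  · -- Backward direction
    rintro ⟨g, hg1, hg2⟩
    refine ⟨c, fun j => if j ≤ c then j else g (j - c), ?_, ?_, ?_, ?_⟩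
    · intro j hj1 hj2
      by_cases h : j ≤ c
      · simp only [if_pos h, Finset.mem_Icc]; omega
      · simp only [if_neg h]
        exact hg1 (j - c) (by omega) (by omega)
    · intro i hi1 hi2
      exact ⟨i, hi1, by omega, by simp [hi2]⟩
    · intro i hi1 hi2
      rw [sippH_split c l (fun j => (if j ≤ c then j else g (j - c)) = i)]
      have hbig : (Finset.Icc 1 c).filter
          (fun j => (if j ≤ c then j else g (j - c)) = i) = {i} := by
        ext j
        simp only [Finset.mem_filter, Finset.mem_Icc, Finset.mem_singleton]
        constructor
        · rintro ⟨hj, hfj⟩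
          rw [if_pos hj.2] at hfj; exact hfj
        · rintro rfl
          exact ⟨⟨hi1, hi2⟩, if_pos hi2⟩
      rw [hbig, Finset.sum_singleton, hl1 i hi1 hi2]
      have hsmall : ∑ j ∈ (Finset.Icc (c+1) (4*c)).filter
          (fun j => (if j ≤ c then j else g (j - c)) = i), l j = B := by
        rw [sippH_shift c l (fun j => (if j ≤ c then j else g (j - c)) = i)]
        rw [← hg2 i hi1 hi2]
        apply Finset.sum_congr
        · apply Finset.filter_congr
          intro j hj
          simp only [Finset.mem_Icc] at hj
          rw [if_neg (by omega)]
          simp only [Nat.add_sub_cancel]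
        · intro j hj
          simp only [Finset.mem_filter, Finset.mem_Icc] at hj
          rw [hl2 (j + c) (by omega) (by omega)]
          congr 1
          omega
      rw [hsmall]
      omega
    · have hsup : ∀ i ∈ Finset.Icc 1 c,
          ((Finset.Icc 1 (4*c)).filter
            (fun j => (if j ≤ c then j else g (j - c)) = i)).sup l = B + 1 := by
        intro i hi
        simp only [Finset.mem_Icc] at hi
        apply le_antisymm
        · apply Finset.sup_le
          intro j hj
          simp only [Finset.mem_filter, Finset.mem_Icc] at hj
          by_cases h : j ≤ c
          · rw [hl1 j hj.1.1 h]
          · rw [hl2 j (by omega) hj.1.2]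
            have := hbound (j - c) (by omega) (by omega)
            omega
        · have hmem : i ∈ (Finset.Icc 1 (4*c)).filter
              (fun j => (if j ≤ c then j else g (j - c)) = i) := by
            simp only [Finset.mem_filter, Finset.mem_Icc]
            exact ⟨⟨hi.1, by omega⟩, if_pos hi.2⟩
          calc B + 1 = l i := (hl1 i hi.1 hi.2).symm
            _ ≤ _ := Finset.le_sup hmem
      rw [Finset.sum_congr rfl hsup, Finset.sum_const, Nat.card_Icc, smul_eq_mul,
        Nat.add_sub_cancel]
end
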